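/- Fix y ∈ {−1, +1} and ν > 0, and define Ψ₀(m) = ∫ 2·max(0, 1 − yη) φ(η; m, ν²) dη. Then for every m ∈ ℝ, the second derivative of Ψ₀ with respect to m equals 2 φ(1; ym, ν²). -/

import Mathlib

open MeasureTheory Real Filter

/-- Gaussian density with mean `m` and variance `ν ^ 2`, evaluated at `x`:
`φ(x; m, ν²) = (2πν²)^{-1/2} exp(−(x−m)²/(2ν²))`. -/
noncomputable def gpdf (m ν x : ℝ) : ℝ :=
  (Real.sqrt (2 * Real.pi * ν ^ 2))⁻¹ * Real.exp (-((x - m) ^ 2) / (2 * ν ^ 2))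

/-- Gaussian cumulative distribution function with mean `m` and variance `ν ^ 2`:
`Φ(c; m, ν²) = ∫_{−∞}^{c} φ(η; m, ν²) dη`. -/
noncomputable def gcdf (m ν c : ℝ) : ℝ := ∫ x in Set.Iio c, gpdf m ν x

/-! On `η < c` the hinge loss `max 0 (c - η)` equals `(c - m) - (η - m)`, and
`(η - m) φ(η) = -ν² ∂_η φ(η)`, so the expected hinge loss under `N(m, ν²)` has the closed form
`(c - m) Φ(c) + ν² φ(c)`. Since `∂_m φ(c; m) = (c - m)/ν² · φ(c; m)` and `∂_m Φ(c; m) = -φ(c; m)`,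
the `φ`-terms cancel and its derivative in `m` is `-Φ(c; m)`, whose derivative is `φ(c; m)`.
For `|y| = 1` the substitution `η ↦ y η` turns `Ψ₀(m)` into twice the expected hinge loss at
mean `y m`, and the chain rule contributes the factor `y² = 1`. -/

open Topology Set

section Gaussian

variable {ν : ℝ}

lemma gpdf_eq_mul_exp_neg_mul_sq (m x : ℝ) :
    gpdf m ν x = (√(2 * π * ν ^ 2))⁻¹ * exp (-(2 * ν ^ 2)⁻¹ * (x - m) ^ 2) := by
  rw [gpdf, neg_div, neg_mul, div_eq_inv_mul]

lemma gpdf_comm (m x : ℝ) : gpdf m ν x = gpdf x ν m := by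
  rw [gpdf, gpdf, ← neg_sub x m, neg_sq]

lemma gpdf_add_add (m x a : ℝ) : gpdf (m + a) ν (x + a) = gpdf m ν x := by
  rw [gpdf, gpdf, add_sub_add_right_eq_sub]

lemma gpdf_mul_mul {y : ℝ} (hy : |y| = 1) (m x : ℝ) : gpdf (y * m) ν (y * x) = gpdf m ν x := by
  rw [gpdf, gpdf, ← mul_sub, mul_pow, ← sq_abs y, hy, one_pow, one_mul]

lemma continuous_gpdf (m : ℝ) : Continuous (gpdf m ν) := by
  unfold gpdf
  fun_prop

lemma integrable_gpdf (hν : 0 < ν) (m : ℝ) : Integrable (gpdf m ν) := by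
  simp_rw [funext (gpdf_eq_mul_exp_neg_mul_sq m)]
  exact ((integrable_exp_neg_mul_sq (by positivity)).comp_sub_right m).const_mul _

lemma integrable_sub_mul_gpdf (hν : 0 < ν) (m : ℝ) :
    Integrable fun x => (x - m) * gpdf m ν x := by
  simp_rw [gpdf_eq_mul_exp_neg_mul_sq m, mul_left_comm (_ - m)]
  exact ((integrable_mul_exp_neg_mul_sq (by positivity)).comp_sub_right m).const_mul _

lemma hasDerivAt_gpdf (hν : 0 < ν) (m x : ℝ) :
    HasDerivAt (gpdf m ν) (-(x - m) / ν ^ 2 * gpdf m ν x) x := by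
  have hexponent := (((hasDerivAt_id' x).sub_const m).fun_pow 2).fun_neg.div_const (2 * ν ^ 2)
  refine (hexponent.exp.const_mul (√(2 * π * ν ^ 2))⁻¹).congr_deriv ?_
  have := hν.ne'
  simp only [gpdf]
  field_simp
  ring

lemma hasDerivAt_gpdf_mean (hν : 0 < ν) (m c : ℝ) :
    HasDerivAt (fun m => gpdf m ν c) ((c - m) / ν ^ 2 * gpdf m ν c) m := by
  rw [show (fun m => gpdf m ν c) = gpdf c ν from funext fun m => gpdf_comm m c]
  refine (hasDerivAt_gpdf hν c m).congr_deriv ?_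
  rw [gpdf_comm m c]
  ring

lemma integral_Iio_sub_mul_gpdf (hν : 0 < ν) (m c : ℝ) :
    ∫ x in Iio c, (x - m) * gpdf m ν x = -ν ^ 2 * gpdf m ν c := by
  have hderiv : ∀ x, HasDerivAt (fun t => -ν ^ 2 * gpdf m ν t) ((x - m) * gpdf m ν x) x := by
    intro x
    refine ((hasDerivAt_gpdf hν m x).const_mul (-ν ^ 2)).congr_deriv ?_
    have := hν.ne'
    field_simp
  have hlim : Tendsto (fun t => -ν ^ 2 * gpdf m ν t) atBot (𝓝 0) :=
    tendsto_zero_of_hasDerivAt_of_integrableOn_Iic (a := c) (fun x _ => hderiv x)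
      (integrable_sub_mul_gpdf hν m).integrableOn ((integrable_gpdf hν m).const_mul _).integrableOn
  rw [← integral_Iic_eq_integral_Iio, integral_Iic_of_hasDerivAt_of_tendsto' (fun x _ => hderiv x)
    (integrable_sub_mul_gpdf hν m).integrableOn hlim, sub_zero]

lemma integral_comp_mul_mul_gpdf {y : ℝ} (hy : |y| = 1) (g : ℝ → ℝ) (m : ℝ) :
    ∫ η, g (y * η) * gpdf m ν η = ∫ η, g η * gpdf (y * m) ν η := by
  simp_rw [← gpdf_mul_mul hy m]
  rw [Measure.integral_comp_mul_left (fun η => g η * gpdf (y * m) ν η), abs_inv, hy, inv_one,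
    one_smul]

lemma gcdf_eq_gcdf_zero (m c : ℝ) : gcdf m ν c = gcdf 0 ν (c - m) := by
  rw [gcdf, gcdf, ← integral_indicator measurableSet_Iio, ← integral_indicator measurableSet_Iio,
    ← integral_add_right_eq_self _ m]
  congr 1 with x
  simp only [indicator, mem_Iio, lt_sub_iff_add_lt]
  rw [← gpdf_add_add 0 x m, zero_add]

lemma hasDerivAt_gcdf (hν : 0 < ν) (m c : ℝ) : HasDerivAt (gcdf m ν) (gpdf m ν c) c := by
  have hint := integrable_gpdf hν m
  have hsplit : gcdf m ν = fun c => (∫ x in Iic 0, gpdf m ν x) + ∫ x in 0..c, gpdf m ν x := by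
    ext c
    rw [gcdf, ← integral_Iic_eq_integral_Iio,
      ← intervalIntegral.integral_Iic_sub_Iic hint.integrableOn hint.integrableOn, add_sub_cancel]
  rw [hsplit]
  exact (intervalIntegral.integral_hasDerivAt_right hint.intervalIntegrable
    ((continuous_gpdf m).stronglyMeasurableAtFilter _ _)
    (continuous_gpdf m).continuousAt).const_add _

lemma hasDerivAt_gcdf_mean (hν : 0 < ν) (m c : ℝ) :
    HasDerivAt (fun m => gcdf m ν c) (-gpdf m ν c) m := by
  simp_rw [gcdf_eq_gcdf_zero _ c]
  have h := (hasDerivAt_gcdf hν 0 (c - m)).comp m ((hasDerivAt_id m).const_sub c)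
  rwa [← gpdf_add_add 0 (c - m) m, zero_add, sub_add_cancel, mul_neg_one] at h

end Gaussian

noncomputable def hingeRisk (m ν c : ℝ) : ℝ := ∫ η, max 0 (c - η) * gpdf m ν η

section HingeRisk

variable {ν : ℝ}

lemma hingeRisk_eq (hν : 0 < ν) (m c : ℝ) :
    hingeRisk m ν c = (c - m) * gcdf m ν c + ν ^ 2 * gpdf m ν c := by
  have hsplit : (fun η => max 0 (c - η) * gpdf m ν η) =
      (Iio c).indicator fun η => (c - m) * gpdf m ν η - (η - m) * gpdf m ν η := by
    ext η
    by_cases h : η < c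
    · rw [indicator_of_mem (mem_Iio.2 h), max_eq_right (by linarith)]
      ring
    · rw [indicator_of_notMem (mt mem_Iio.1 h), max_eq_left (by linarith), zero_mul]
  rw [hingeRisk, hsplit, integral_indicator measurableSet_Iio,
    integral_sub ((integrable_gpdf hν m).const_mul _).integrableOn
      (integrable_sub_mul_gpdf hν m).integrableOn,
    integral_const_mul, integral_Iio_sub_mul_gpdf hν, gcdf]
  ring

lemma hasDerivAt_hingeRisk (hν : 0 < ν) (m c : ℝ) :
    HasDerivAt (fun m => hingeRisk m ν c) (-gcdf m ν c) m := by
  simp_rw [hingeRisk_eq hν]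
  refine ((((hasDerivAt_id' m).const_sub c).mul (hasDerivAt_gcdf_mean hν m c)).add
    ((hasDerivAt_gpdf_mean hν m c).const_mul (ν ^ 2))).congr_deriv ?_
  have := hν.ne'
  field_simp
  ring

end HingeRisk

theorem svc_Psi2 (y ν : ℝ) (hy : y = -1 ∨ y = 1) (hν : 0 < ν) (m : ℝ) :
    HasDerivAt (deriv (fun m' => ∫ η, 2 * max 0 (1 - y * η) * gpdf m' ν η))
      (2 * gpdf (y * m) ν 1) m := by
  have hy_abs : |y| = 1 := by rcases hy with rfl | rfl <;> simp
  have hΨ : (fun m' => ∫ η, 2 * max 0 (1 - y * η) * gpdf m' ν η) =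
      fun m' => 2 * hingeRisk (y * m') ν 1 := by
    ext m'
    simp_rw [mul_assoc (2 : ℝ)]
    rw [integral_const_mul, integral_comp_mul_mul_gpdf hy_abs (fun η => max 0 (1 - η)), hingeRisk]
  have hscale (m' : ℝ) : HasDerivAt (fun m' => y * m') y m' := by
    simpa using (hasDerivAt_id' m').const_mul y
  have hΨ' : deriv (fun m' => ∫ η, 2 * max 0 (1 - y * η) * gpdf m' ν η) =
      fun m' => -2 * y * gcdf (y * m') ν 1 := by
    rw [hΨ]
    ext m'
    exact (((hasDerivAt_hingeRisk hν (y * m') 1).comp m' (hscale m')).const_mul 2).deriv.trans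
      (by ring)
  rw [hΨ']
  refine (((hasDerivAt_gcdf_mean hν (y * m) 1).comp m (hscale m)).const_mul (-2 * y)).congr_deriv ?_
  have hyy : y * y = 1 := by rw [← abs_mul_abs_self, hy_abs, one_mul]
  linear_combination 2 * gpdf (y * m) ν 1 * hyy
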